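/- arXiv:2502.20121 — 12 statements merged into one kernel-verified Lean document; each statement's English description precedes it below -/
import Mathlib

section
/- Let A, P be invertible N×N real matrices and let Q be any N×N real matrix with Q·Q = Q. Define the left projector Q_L := A·Q·A⁻¹. Then Q + P⁻¹·A·(I − Q) = (A⁻¹·Q_L + P⁻¹·(I − Q_L))·A. Consequently, if the matrix A⁻¹·Q_L + P⁻¹·(I − Q_L) is invertible with inverse P̄, the DFPI update x ↦ x + Q·(x^∞ − x) + P⁻¹·A·(I − Q)·(x^∞ − x) coincides with the Richardson update x ↦ x + P̄⁻¹·(b − A·x), where x^∞ := A⁻¹·b. -/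
open Matrix

theorem stmt1 {N : ℕ} (A P Q : Matrix (Fin N) (Fin N) ℝ)
    (hA : IsUnit A.det) (hP : IsUnit P.det)
    (hQ : Q * Q = Q)
    (QL : Matrix (Fin N) (Fin N) ℝ) (hQL : QL = A * Q * A⁻¹) :
    Q + P⁻¹ * A * (1 - Q) = (A⁻¹ * QL + P⁻¹ * (1 - QL)) * A ∧
    (IsUnit (A⁻¹ * QL + P⁻¹ * (1 - QL)).det →
      ∀ (Pbar : Matrix (Fin N) (Fin N) ℝ),
        Pbar = (A⁻¹ * QL + P⁻¹ * (1 - QL))⁻¹ →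
        ∀ (b x : Fin N → ℝ),
          x + Q.mulVec (A⁻¹.mulVec b - x)
            + (P⁻¹ * A * (1 - Q)).mulVec (A⁻¹.mulVec b - x)
          = x + Pbar⁻¹.mulVec (b - A.mulVec x)) := by
  have hAinv : A⁻¹ * A = 1 := nonsing_inv_mul A hA
  have key : Q + P⁻¹ * A * (1 - Q) = (A⁻¹ * QL + P⁻¹ * (1 - QL)) * A := by
    subst hQL
    have h1 : A⁻¹ * (A * Q * A⁻¹) * A = Q := by
      rw [mul_assoc, mul_assoc, hAinv, mul_one, ← mul_assoc, hAinv, one_mul]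
    rw [add_mul, h1]
    congr 1
    rw [mul_assoc, mul_sub, mul_one, mul_assoc P⁻¹ _ A, sub_mul, one_mul,
      mul_assoc (A * Q), hAinv, mul_one, mul_sub]
  refine ⟨key, fun hM Pbar hPbar b x => ?_⟩
  rw [hPbar, nonsing_inv_nonsing_inv _ hM]
  have hb : A.mulVec (A⁻¹.mulVec b) = b := by
    rw [mulVec_mulVec, mul_nonsing_inv A hA, one_mulVec]
  calc x + Q.mulVec (A⁻¹.mulVec b - x) + (P⁻¹ * A * (1 - Q)).mulVec (A⁻¹.mulVec b - x)
      = x + (Q + P⁻¹ * A * (1 - Q)).mulVec (A⁻¹.mulVec b - x) := by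
        rw [add_mulVec, add_assoc]
    _ = x + ((A⁻¹ * QL + P⁻¹ * (1 - QL)) * A).mulVec (A⁻¹.mulVec b - x) := by rw [key]
    _ = x + (A⁻¹ * QL + P⁻¹ * (1 - QL)).mulVec (b - A.mulVec x) := by
        rw [← mulVec_mulVec, mulVec_sub, hb]
end

section
/- Let A, P be invertible N×N real matrices and Q an N×N real matrix with Q·Q = Q. Let Z ⊆ ℝᴺ be the range of the linear map x ↦ Q·x. If Z is invariant under P⁻¹·A (i.e. (P⁻¹·A)·z ∈ Z for every z ∈ Z), then the matrix N := Q + P⁻¹·A·(I − Q) is invertible. -/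
open Matrix

theorem stmt3 {N : ℕ} (A P Q : Matrix (Fin N) (Fin N) ℝ)
    (hA : IsUnit A.det) (hP : IsUnit P.det)
    (hQ : Q * Q = Q)
    (hinv : ∀ z ∈ LinearMap.range Q.mulVecLin,
      (P⁻¹ * A).mulVec z ∈ LinearMap.range Q.mulVecLin) :
    IsUnit (Q + P⁻¹ * A * (1 - Q)).det := by
  set M := P⁻¹ * A with hM
  set Z := LinearMap.range Q.mulVecLin with hZ
  have hMdet : IsUnit M.det := by
    rw [hM, Matrix.det_mul]
    exact (Matrix.isUnit_nonsing_inv_det P hP).mul hA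
  have hMunit : IsUnit M := M.isUnit_iff_isUnit_det.mpr hMdet
  have hMinj : Function.Injective M.mulVec :=
    Matrix.mulVec_injective_iff_isUnit.mpr hMunit
  have hMsurj : Function.Surjective M.mulVec :=
    Matrix.mulVec_surjective_iff_isUnit.mpr hMunit
  -- the linear equivalence given by M
  have hbij : Function.Bijective M.mulVecLin := ⟨hMinj, hMsurj⟩
  let e : (Fin N → ℝ) ≃ₗ[ℝ] (Fin N → ℝ) := LinearEquiv.ofBijective M.mulVecLin hbij
  have hmaple : Submodule.map M.mulVecLin Z ≤ Z := by
    rintro _ ⟨z, hzZ, rfl⟩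
    exact hinv z hzZ
  have hmapeq : Submodule.map M.mulVecLin Z = Z := by
    apply Submodule.eq_of_le_of_finrank_le hmaple
    have : Submodule.map M.mulVecLin Z = Submodule.map (e : (Fin N → ℝ) →ₗ[ℝ] (Fin N → ℝ)) Z := rfl
    rw [this, LinearEquiv.finrank_map_eq]
  -- show injectivity of the target matrix
  rw [← Matrix.isUnit_iff_isUnit_det, ← Matrix.mulVec_injective_iff_isUnit]
  have key : ∀ x, (Q + M * (1 - Q)).mulVec x = 0 → x = 0 := by
    intro x hx
    rw [Matrix.add_mulVec, ← Matrix.mulVec_mulVec] at hx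
    set y := (1 - Q).mulVec x with hy
    have hQy : Q.mulVec y = 0 := by
      rw [hy, Matrix.mulVec_mulVec, Matrix.mul_sub, mul_one, hQ, sub_self,
        Matrix.zero_mulVec]
    have hMy : M.mulVec y ∈ Z := by
      have : M.mulVec y = -(Q.mulVec x) := by
        rw [eq_neg_iff_add_eq_zero, add_comm]; exact hx
      rw [this]
      exact neg_mem (LinearMap.mem_range_self _ x)
    have hyZ : y ∈ Z := by
      rw [← hmapeq] at hMy
      obtain ⟨y', hy'Z, hy'⟩ := hMy
      have : y' = y := hMinj hy'
      rwa [← this]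
    obtain ⟨z, hz⟩ := hyZ
    have hy0 : y = 0 := by
      have : Q.mulVec y = y := by
        rw [← hz]
        show Q.mulVec (Q.mulVec z) = Q.mulVec z
        rw [Matrix.mulVec_mulVec, hQ]
      rw [← this, hQy]
    have hQx : Q.mulVec x = 0 := by
      have := hx
      rw [hy0, Matrix.mulVec_zero, add_zero] at this
      exact this
    have : x = Q.mulVec x + y := by
      rw [hy, ← Matrix.add_mulVec, add_sub_cancel, Matrix.one_mulVec]
    rw [this, hQx, hy0, add_zero]
  intro x y hxy
  have : (Q + M * (1 - Q)).mulVec (x - y) = 0 := by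
    rw [Matrix.mulVec_sub, hxy, sub_self]
  have := key _ this
  exact sub_eq_zero.mp this
end

section
/- Let A, P be invertible N×N real matrices and Z, Y be N×M real matrices such that Yᵀ·A·Z is invertible. Define the Petrov–Galerkin projector Q := Z·(Yᵀ·A·Z)⁻¹·Yᵀ·A. If the M×M matrix Yᵀ·P·Z is invertible, then the matrix N := Q + P⁻¹·A·(I − Q) is invertible. -/
open Matrix

theorem stmt4 {N M : ℕ} (A P : Matrix (Fin N) (Fin N) ℝ)
    (Z Y : Matrix (Fin N) (Fin M) ℝ)
    (hA : IsUnit A.det) (hP : IsUnit P.det)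
    (hYAZ : IsUnit (Yᵀ * A * Z).det)
    (Q : Matrix (Fin N) (Fin N) ℝ)
    (hQdef : Q = Z * (Yᵀ * A * Z)⁻¹ * Yᵀ * A)
    (hYPZ : IsUnit (Yᵀ * P * Z).det) :
    IsUnit (Q + P⁻¹ * A * (1 - Q)).det := by
  set B := (Yᵀ * A * Z)⁻¹ with hBdef
  have hAinv : A * A⁻¹ = 1 := mul_nonsing_inv A hA
  have hPinv : P⁻¹ * P = 1 := nonsing_inv_mul P hP
  have hB : (Yᵀ * A * Z) * B = 1 := mul_nonsing_inv _ hYAZ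
  have key : Q + P⁻¹ * A * (1 - Q)
      = P⁻¹ * A * (1 + ((A⁻¹ * P - 1) * (Z * B)) * (Yᵀ * A)) := by
    subst hQdef
    have h1 : A * (A⁻¹ * (P * (Z * (B * (Yᵀ * A))))) = P * (Z * (B * (Yᵀ * A))) := by
      rw [← Matrix.mul_assoc, hAinv, Matrix.one_mul]
    have h2 : P⁻¹ * (P * (Z * (B * (Yᵀ * A)))) = Z * (B * (Yᵀ * A)) := by
      rw [← Matrix.mul_assoc, hPinv, Matrix.one_mul]
    simp only [Matrix.mul_sub, Matrix.sub_mul, Matrix.mul_add, Matrix.add_mul,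
      Matrix.mul_one, Matrix.one_mul, Matrix.mul_assoc, h1, h2]
    abel
  rw [key, det_mul, det_mul]
  have hcomm : (1 + ((A⁻¹ * P - 1) * (Z * B)) * (Yᵀ * A)).det
      = (1 + (Yᵀ * A) * ((A⁻¹ * P - 1) * (Z * B))).det :=
    det_one_add_mul_comm _ _
  have hsmall : (1 : Matrix (Fin M) (Fin M) ℝ) + (Yᵀ * A) * ((A⁻¹ * P - 1) * (Z * B))
      = (Yᵀ * P * Z) * B := by
    have h1 : A * (A⁻¹ * (P * (Z * B))) = P * (Z * B) := by
      rw [← Matrix.mul_assoc, hAinv, Matrix.one_mul]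
    have h3 : Yᵀ * (A * (Z * B)) = 1 := by
      rw [← Matrix.mul_assoc, ← Matrix.mul_assoc, hB]
    simp only [Matrix.mul_sub, Matrix.sub_mul, Matrix.mul_one, Matrix.one_mul, Matrix.mul_assoc, h1, h3]
    abel
  have hdetB : IsUnit B.det := isUnit_nonsing_inv_det _ hYAZ
  have hdetPinv : IsUnit P⁻¹.det := isUnit_nonsing_inv_det _ hP
  rw [hcomm, hsmall, det_mul]
  exact (hdetPinv.mul hA).mul (hYPZ.mul hdetB)
end

section
/- Let V be a finite-dimensional vector space over a field 𝕜, let f and Q be endomorphisms of V with Q ∘ Q = Q, let Z := range(Q), and suppose Z is invariant under f (f(z) ∈ Z for all z ∈ Z). Let N := Q + f ∘ (id − Q) and let f|_Z denote the restriction of f to Z (an endomorphism of Z). Then the characteristic polynomials satisfy charpoly(N) · charpoly(f|_Z) = (X − 1)^{dim Z} · charpoly(f). In particular, the eigenvalues of N are 1 (with multiplicity dim Z) together with the eigenvalues of f not belonging to the restriction f|_Z. -/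
/-!
The range `Z` of `Q` is invariant under `f` and under `N = Q + f ∘ (1 - Q)`. The characteristic
polynomial of an endomorphism with an invariant submodule is the product of those of its
restriction and of the induced map on the quotient (its matrix in a basis adapted to the
submodule is block triangular). Since `N` is the identity on `Z`, and `N - f = Q - f ∘ Q` takes
values in `Z`, so that `N` and `f` induce the same map on `V ⧸ Z`, the two factorisations share
the quotient factor.
-/

open Polynomial Module

namespace LinearMap

variable {R V : Type*} [CommRing R] [AddCommGroup V] [Module R V]

theorem toMatrix_sumQuot {W : Submodule R V} {m n : Type*} [Fintype m] [Fintype n]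
    [DecidableEq m] [DecidableEq n] (bW : Basis m R W) (bQ : Basis n R (V ⧸ W))
    (e : V →ₗ[R] V) (he : W ≤ W.comap e) :
    toMatrix (bW.sumQuot bQ) (bW.sumQuot bQ) e =
      Matrix.fromBlocks (toMatrix bW bW (e.restrict he))
        (Matrix.of fun i l ↦ (bW.sumQuot bQ).repr (e (bW.sumQuot bQ (Sum.inr l))) (Sum.inl i))
        0 (toMatrix bQ bQ (W.mapQ W e he)) := by
  ext (i | j) (k | l)
  · simp only [toMatrix_apply, Matrix.fromBlocks_apply₁₁, Basis.sumQuot_inl]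
    exact Basis.sumQuot_repr_inl_of_mem bW bQ _ (he (bW k).2) i
  · simp [toMatrix_apply]
  · simpa [toMatrix_apply] using Basis.sumQuot_repr_inr_of_mem bW bQ _ (he (bW k).2) j
  · simp only [toMatrix_apply, Basis.sumQuot_repr_inr, Matrix.fromBlocks_apply₂₂]
    rw [← Basis.sumQuot_inr bW bQ l, W.mapQ_apply]
    rfl

theorem charpoly_eq_charpoly_restrict_mul_charpoly_mapQ [Free R V] [Module.Finite R V]
    (W : Submodule R V) [Free R W] [Module.Finite R W] [Free R (V ⧸ W)]
    (e : V →ₗ[R] V) (he : W ≤ W.comap e) :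
    e.charpoly = (e.restrict he).charpoly * (W.mapQ W e he).charpoly := by
  classical
  let bW := Free.chooseBasis R W
  let bQ := Free.chooseBasis R (V ⧸ W)
  rw [← charpoly_toMatrix e (bW.sumQuot bQ), toMatrix_sumQuot bW bQ e he,
    Matrix.charpoly_fromBlocks_zero₂₁, charpoly_toMatrix, charpoly_toMatrix]

end LinearMap

section

variable {R V : Type*} [Ring R] [AddCommGroup V] [Module R V]

theorem LinearMap.restrict_eq_one {e : V →ₗ[R] V} {W : Submodule R V} (he : W ≤ W.comap e)
    (h : ∀ x ∈ W, e x = x) : e.restrict he = 1 :=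
  LinearMap.ext fun x ↦ Subtype.ext (h x x.2)

theorem Submodule.mapQ_eq_mapQ_of_sub_mem {W : Submodule R V} {e e' : V →ₗ[R] V}
    (he : W ≤ W.comap e) (he' : W ≤ W.comap e') (h : ∀ x, e x - e' x ∈ W) :
    W.mapQ W e he = W.mapQ W e' he' := by
  ext x
  exact (Submodule.Quotient.eq W).mpr (h x)

variable (f Q : V →ₗ[R] V)

theorem LinearMap.add_comp_id_sub_apply_of_mem_range (hQ : IsIdempotentElem Q) {z : V}
    (hz : z ∈ range Q) : (Q + f ∘ₗ (LinearMap.id - Q) : V →ₗ[R] V) z = z := by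
  simp [LinearMap.IsIdempotentElem.mem_range_iff hQ |>.mp hz]

theorem LinearMap.add_comp_id_sub_apply_sub_mem_range (hZ : ∀ z ∈ range Q, f z ∈ range Q)
    (v : V) : (Q + f ∘ₗ (LinearMap.id - Q) : V →ₗ[R] V) v - f v ∈ range Q := by
  have : (Q + f ∘ₗ (LinearMap.id - Q) : V →ₗ[R] V) v - f v = Q v - f (Q v) := by
    simp only [LinearMap.add_apply, LinearMap.comp_apply, LinearMap.sub_apply, LinearMap.id_apply,
      map_sub]
    abel
  exact this ▸ sub_mem (mem_range_self Q v) (hZ _ (mem_range_self Q v))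

end

theorem stmt5 {𝕜 : Type*} [Field 𝕜] {V : Type*} [AddCommGroup V] [Module 𝕜 V]
    [FiniteDimensional 𝕜 V]
    (f Q : V →ₗ[𝕜] V) (hQ : Q ∘ₗ Q = Q)
    (hZ : ∀ z ∈ LinearMap.range Q, f z ∈ LinearMap.range Q) :
    (Q + f ∘ₗ (LinearMap.id - Q)).charpoly * (f.restrict hZ).charpoly
      = (X - 1) ^ (Module.finrank 𝕜 (LinearMap.range Q)) * f.charpoly := by
  set N := Q + f ∘ₗ (LinearMap.id - Q)
  have hNZ (z : V) (hz : z ∈ LinearMap.range Q) : N z = z :=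
    f.add_comp_id_sub_apply_of_mem_range Q hQ hz
  have hN : LinearMap.range Q ≤ (LinearMap.range Q).comap N := fun z hz ↦ by
    simpa only [Submodule.mem_comap, hNZ z hz] using hz
  have hmapQ : (LinearMap.range Q).mapQ (LinearMap.range Q) N hN =
      (LinearMap.range Q).mapQ (LinearMap.range Q) f hZ :=
    Submodule.mapQ_eq_mapQ_of_sub_mem hN hZ (f.add_comp_id_sub_apply_sub_mem_range Q hZ)
  rw [N.charpoly_eq_charpoly_restrict_mul_charpoly_mapQ _ hN,
    f.charpoly_eq_charpoly_restrict_mul_charpoly_mapQ _ hZ, LinearMap.restrict_eq_one hN hNZ,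
    LinearMap.charpoly_one, hmapQ]
  ring
end

section
/- Let V be a finite-dimensional vector space over a field 𝕜, let f and Q be endomorphisms of V with Q ∘ Q = Q, let Z := range(Q), and suppose Z is invariant under f. Let N := Q + f ∘ (id − Q). Suppose ε ∈ V satisfies f(ε) = λ·ε for some λ ∈ 𝕜 with λ ≠ 1, and ε ∉ Z. Then the vector e := (id − Q)(ε) + (λ − 1)⁻¹ · (Q ∘ f ∘ (id − Q))(ε) is nonzero and satisfies N(e) = λ·e; i.e., e is an eigenvector of N for the eigenvalue λ. -/
theorem stmt6 {𝕜 : Type*} [Field 𝕜] {V : Type*} [AddCommGroup V] [Module 𝕜 V]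
    [FiniteDimensional 𝕜 V]
    (f Q : V →ₗ[𝕜] V) (hQ : Q ∘ₗ Q = Q)
    (hZ : ∀ z ∈ LinearMap.range Q, f z ∈ LinearMap.range Q)
    (lam : 𝕜) (hlam : lam ≠ 1)
    (ε : V) (hε : f ε = lam • ε) (hεZ : ε ∉ LinearMap.range Q)
    (e : V)
    (he : e = (LinearMap.id - Q : V →ₗ[𝕜] V) ε
      + (lam - 1)⁻¹ • ((Q ∘ₗ f ∘ₗ (LinearMap.id - Q) : V →ₗ[𝕜] V) ε)) :
    e ≠ 0 ∧ (Q + f ∘ₗ (LinearMap.id - Q) : V →ₗ[𝕜] V) e = lam • e := by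
  have hQQ : ∀ x, Q (Q x) = Q x := fun x => by
    have := LinearMap.ext_iff.mp hQ x
    simpa using this
  have hfQ : Q (f (Q ε)) = f (Q ε) := by
    obtain ⟨x, hx⟩ := hZ _ ⟨ε, rfl⟩
    rw [← hx, hQQ]
  have hne : lam - 1 ≠ 0 := fun h => hlam (by linear_combination h)
  have he' : e = (ε - Q ε) + (lam - 1)⁻¹ • (lam • Q ε - f (Q ε)) := by
    rw [he]
    simp [map_sub, map_smul, hε, hfQ, hQQ]
  constructor
  · intro h0
    apply hεZ
    have : ε = Q ε - (lam - 1)⁻¹ • (lam • Q ε - f (Q ε)) := by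
      rw [he'] at h0
      linear_combination (norm := module) h0
    rw [this]
    exact sub_mem (LinearMap.mem_range_self Q ε)
      (Submodule.smul_mem _ _ (sub_mem (Submodule.smul_mem _ _ (LinearMap.mem_range_self Q ε))
        (hZ _ (LinearMap.mem_range_self Q ε))))
  · have hQe : Q e = (lam - 1)⁻¹ • (lam • Q ε - f (Q ε)) := by
      rw [he']
      simp [map_sub, map_smul, hQQ, hfQ]
    simp only [LinearMap.add_apply, LinearMap.comp_apply, LinearMap.sub_apply,
      LinearMap.id_apply, hQe]
    rw [he']
    simp only [map_add, map_sub, map_smul, hε]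
    match_scalars <;> field_simp <;> ring
end

section
/- Let V be a finite-dimensional vector space over a field 𝕜, let f and Q be endomorphisms of V with Q ∘ Q = Q, let Z := range(Q), and suppose Z is invariant under f. Let N := Q + f ∘ (id − Q). Let λ ∈ 𝕜 with λ ≠ 1, let ε, ε′ ∈ V satisfy the Jordan chain relation f(ε′) = λ·ε′ + ε, and let z ∈ Z. Define e := (id − Q)(ε) + z, z′ := (1 − λ)⁻¹ · (z − (Q ∘ f ∘ (id − Q))(ε′)) and e′ := (id − Q)(ε′) + z′. Then N(e′) = λ·e′ + e; i.e., the Jordan chain relation is transported from f to N. -/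
theorem stmt7 {𝕜 : Type*} [Field 𝕜] {V : Type*} [AddCommGroup V] [Module 𝕜 V]
    [FiniteDimensional 𝕜 V]
    (f Q : V →ₗ[𝕜] V) (hQ : Q ∘ₗ Q = Q)
    (hZ : ∀ z ∈ LinearMap.range Q, f z ∈ LinearMap.range Q)
    (lam : 𝕜) (hlam : lam ≠ 1)
    (ε ε' : V) (hchain : f ε' = lam • ε' + ε)
    (z : V) (hz : z ∈ LinearMap.range Q)
    (e z' e' : V)
    (he : e = (LinearMap.id - Q : V →ₗ[𝕜] V) ε + z)
    (hz' : z' = (1 - lam)⁻¹ • (z - (Q ∘ₗ f ∘ₗ (LinearMap.id - Q) : V →ₗ[𝕜] V) ε'))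
    (he' : e' = (LinearMap.id - Q : V →ₗ[𝕜] V) ε' + z') :
    (Q + f ∘ₗ (LinearMap.id - Q) : V →ₗ[𝕜] V) e' = lam • e' + e := by
  have hQQ : ∀ v, Q (Q v) = Q v := fun v => congrArg (· v) hQ
  have hfix : ∀ v ∈ LinearMap.range Q, Q v = v := by
    rintro v ⟨y, rfl⟩; exact hQQ y
  have hQz : Q z = z := hfix z hz
  set w : V := Q (f (ε' - Q ε')) with hw
  have hQfQ : Q (f (Q ε')) = f (Q ε') := hfix _ (hZ _ ⟨ε', rfl⟩)
  have hQz' : Q z' = z' := by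
    rw [hz']
    simp only [map_smul, map_sub, LinearMap.comp_apply, LinearMap.sub_apply,
      LinearMap.id_apply, hQz, hQQ]
  have hc : (1 : 𝕜) - lam ≠ 0 := sub_ne_zero.mpr fun h => hlam h.symm
  have hkey : (1 - lam) • z' = z - w := by
    rw [hz', smul_inv_smul₀ hc]
    simp [hw, LinearMap.comp_apply]
  simp only [he', he, LinearMap.add_apply, LinearMap.comp_apply, LinearMap.sub_apply,
    LinearMap.id_apply, map_add, map_sub, hQQ, hQz']
  have hw2 : w = lam • Q ε' + Q ε - f (Q ε') := by
    rw [hw, map_sub f, map_sub Q, hQfQ, hchain, map_add, map_smul]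
  rw [hw2] at hkey
  rw [hchain]
  linear_combination (norm := module) hkey
end

section
/- Let V be a finite-dimensional vector space over a field 𝕜, let f and Q be endomorphisms of V with Q ∘ Q = Q, let Z := range(Q), and suppose Z is invariant under f. Let N := Q + f ∘ (id − Q). Suppose ε, ε′, ε″ ∈ V satisfy the Jordan chain relations at eigenvalue 1: f(ε′) = ε′ + ε and f(ε″) = ε″ + ε′. Define e := (id − Q)(ε) + (Q ∘ f ∘ (id − Q))(ε′) and e′ := (id − Q)(ε′) + (Q ∘ f ∘ (id − Q))(ε″). Then N(e′) = e′ + e. -/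
theorem stmt8 {𝕜 : Type*} [Field 𝕜] {V : Type*} [AddCommGroup V] [Module 𝕜 V]
    [FiniteDimensional 𝕜 V]
    (f Q : V →ₗ[𝕜] V) (hQ : Q ∘ₗ Q = Q)
    (hZ : ∀ z ∈ LinearMap.range Q, f z ∈ LinearMap.range Q)
    (ε ε' ε'' : V) (hchain1 : f ε' = ε' + ε) (hchain2 : f ε'' = ε'' + ε')
    (e e' : V)
    (he : e = (LinearMap.id - Q : V →ₗ[𝕜] V) ε
      + (Q ∘ₗ f ∘ₗ (LinearMap.id - Q) : V →ₗ[𝕜] V) ε')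
    (he' : e' = (LinearMap.id - Q : V →ₗ[𝕜] V) ε'
      + (Q ∘ₗ f ∘ₗ (LinearMap.id - Q) : V →ₗ[𝕜] V) ε'') :
    (Q + f ∘ₗ (LinearMap.id - Q) : V →ₗ[𝕜] V) e' = e' + e := by
  have hQ' : ∀ x, Q (Q x) = Q x := fun x => DFunLike.congr_fun hQ x
  obtain ⟨w, hw⟩ := hZ (Q ε') ⟨ε', rfl⟩
  have hfQ : Q (f (Q ε')) = f (Q ε') := by rw [← hw, hQ']
  obtain ⟨w2, hw2⟩ := hZ (Q ε'') ⟨ε'', rfl⟩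
  have hfQ2 : Q (f (Q ε'')) = f (Q ε'') := by rw [← hw2, hQ']
  subst he he'
  simp only [LinearMap.add_apply, LinearMap.comp_apply, LinearMap.sub_apply,
    LinearMap.id_apply, map_sub, map_add, hQ', hfQ, hfQ2, hchain1, hchain2]
  abel
end

section
/- Let A, P be invertible N×N real matrices, b ∈ ℝᴺ, x₀ ∈ ℝᴺ, x^∞ := A⁻¹·b. Let v(0) := x₀, v(k+1) := v(k) + P⁻¹·(b − A·v(k)) be the Richardson sequence, r̃₀ := P⁻¹·(b − A·x₀), and Kⁿ := span{(P⁻¹·A)ᵏ·r̃₀ : 0 ≤ k ≤ n−1}. Let Q be any N×N real matrix with Q·Q = Q whose range contains Kⁿ. Then the deflated fractional iterate after n Richardson steps equals the deflated initial guess: v(n) + Q·(x^∞ − v(n)) = x₀ + Q·(x^∞ − x₀). -/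
open Matrix

theorem stmt14 {N : ℕ} (A P Q : Matrix (Fin N) (Fin N) ℝ)
    (hA : IsUnit A.det) (hP : IsUnit P.det)
    (b x₀ : Fin N → ℝ)
    (v : ℕ → (Fin N → ℝ)) (hv0 : v 0 = x₀)
    (hv : ∀ k, v (k + 1) = v k + P⁻¹.mulVec (b - A.mulVec (v k)))
    (r₀ : Fin N → ℝ) (hr₀ : r₀ = P⁻¹.mulVec (b - A.mulVec x₀))
    (n : ℕ)
    (hQ : Q * Q = Q)
    (hK : Submodule.span ℝ
        (Set.range fun k : Fin n => ((P⁻¹ * A) ^ (k : ℕ)).mulVec r₀)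
      ≤ LinearMap.range Q.mulVecLin) :
    v n + Q.mulVec (A⁻¹.mulVec b - v n) = x₀ + Q.mulVec (A⁻¹.mulVec b - x₀) := by
  set S : ℕ → Submodule ℝ (Fin N → ℝ) := fun m =>
    Submodule.span ℝ (Set.range fun k : Fin m => ((P⁻¹ * A) ^ (k : ℕ)).mulVec r₀) with hS
  have Smono : ∀ {k m : ℕ}, k ≤ m → S k ≤ S m := by
    intro k m hkm
    apply Submodule.span_mono
    rintro x ⟨j, rfl⟩
    exact ⟨⟨j, lt_of_lt_of_le j.2 hkm⟩, rfl⟩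
  have Sstep : ∀ k x, x ∈ S k → (P⁻¹ * A).mulVec x ∈ S (k + 1) := by
    intro k x hx
    induction hx using Submodule.span_induction with
    | mem x hx =>
      obtain ⟨j, rfl⟩ := hx
      simp only [Matrix.mulVec_mulVec, ← Matrix.mul_assoc]
      rw [← pow_succ']
      exact Submodule.subset_span ⟨⟨j + 1, Nat.succ_lt_succ j.2⟩, rfl⟩
    | zero => simp
    | add x y _ _ hx hy => rw [Matrix.mulVec_add]; exact add_mem hx hy
    | smul c x _ hx => rw [Matrix.mulVec_smul]; exact Submodule.smul_mem _ c hx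
  have key : ∀ k, v k - x₀ ∈ S k := by
    intro k
    induction k with
    | zero => simp [hv0]
    | succ k ih =>
      have h1 : v (k + 1) - x₀ = (v k - x₀) - (P⁻¹ * A).mulVec (v k - x₀) + r₀ := by
        rw [hv k, hr₀]
        simp only [Matrix.mulVec_sub, ← Matrix.mulVec_mulVec]
        abel
      rw [h1]
      refine add_mem (sub_mem (Smono (Nat.le_succ k) ih) (Sstep k _ ih)) ?_
      have : ((P⁻¹ * A) ^ (0 : ℕ)).mulVec r₀ = r₀ := by simp
      exact this ▸ Submodule.subset_span ⟨⟨0, Nat.succ_pos k⟩, rfl⟩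
  have hmem : v n - x₀ ∈ LinearMap.range Q.mulVecLin := hK (key n)
  obtain ⟨y, hy⟩ := hmem
  have hfix : Q.mulVec (v n - x₀) = v n - x₀ := by
    rw [← hy, Matrix.mulVecLin_apply, Matrix.mulVec_mulVec, hQ]
  have h2 : A⁻¹.mulVec b - v n = (A⁻¹.mulVec b - x₀) - (v n - x₀) := by abel
  rw [h2, Matrix.mulVec_sub, hfix]
  abel
end

section
/- Let A, P be invertible N×N real matrices, b ∈ ℝᴺ, x₀ ∈ ℝᴺ, x^∞ := A⁻¹·b, r̃₀ := P⁻¹·(b − A·x₀), and Kⁿ := span{(P⁻¹·A)ᵏ·r̃₀ : 0 ≤ k ≤ n−1} (with K⁰ := {0}). Let (Q_k) be any family of N×N real matrices such that for each k the range of Q_k is contained in Kᵏ. Define the dynamically deflated sequence u(0) := x₀ and u(k+1) := u(k) + Q_k·(x^∞ − u(k)) + P⁻¹·A·(I − Q_k)·(x^∞ − u(k)). Then for every n, u(n) − x₀ ∈ Kⁿ; i.e., every DFPI iterate lies in the affine Krylov space x₀ + Kⁿ. -/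
open Matrix

theorem stmt15 {N : ℕ} (A P : Matrix (Fin N) (Fin N) ℝ)
    (hA : IsUnit A.det) (hP : IsUnit P.det)
    (b x₀ : Fin N → ℝ)
    (r₀ : Fin N → ℝ) (hr₀ : r₀ = P⁻¹.mulVec (b - A.mulVec x₀))
    (K : ℕ → Submodule ℝ (Fin N → ℝ))
    (hK : ∀ n, K n = Submodule.span ℝ
        (Set.range fun k : Fin n => ((P⁻¹ * A) ^ (k : ℕ)).mulVec r₀))
    (Q : ℕ → Matrix (Fin N) (Fin N) ℝ)
    (hQ : ∀ k, LinearMap.range (Q k).mulVecLin ≤ K k)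
    (u : ℕ → (Fin N → ℝ)) (hu0 : u 0 = x₀)
    (hu : ∀ k, u (k + 1) = u k + (Q k).mulVec (A⁻¹.mulVec b - u k)
      + (P⁻¹ * A * (1 - Q k)).mulVec (A⁻¹.mulVec b - u k)) :
    ∀ n, u n - x₀ ∈ K n := by
  have hmono : ∀ m, K m ≤ K (m + 1) := by
    intro m
    rw [hK, hK]
    apply Submodule.span_mono
    rintro _ ⟨k, rfl⟩
    exact ⟨⟨k, Nat.lt_succ_of_lt k.isLt⟩, rfl⟩
  have hmap : ∀ m, ∀ v ∈ K m, (P⁻¹ * A).mulVec v ∈ K (m + 1) := by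
    intro m v hv
    rw [hK] at hv ⊢
    induction hv using Submodule.span_induction with
    | mem x hx =>
      obtain ⟨k, rfl⟩ := hx
      apply Submodule.subset_span
      refine ⟨⟨(k : ℕ) + 1, Nat.succ_lt_succ k.isLt⟩, ?_⟩
      simp only [Matrix.mulVec_mulVec]
      rw [← pow_succ']
    | zero => simp
    | add x y _ _ hx hy => rw [Matrix.mulVec_add]; exact add_mem hx hy
    | smul c x _ hx => rw [Matrix.mulVec_smul]; exact Submodule.smul_mem _ _ hx
  have hr : ∀ m, r₀ ∈ K (m + 1) := by
    intro m
    rw [hK]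
    apply Submodule.subset_span
    exact ⟨⟨0, Nat.succ_pos m⟩, by simp⟩
  intro n
  induction n with
  | zero => rw [hu0, sub_self]; exact zero_mem _
  | succ k ih =>
    have hQmem : (Q k).mulVec (A⁻¹.mulVec b - u k) ∈ K k :=
      hQ k ⟨A⁻¹.mulVec b - u k, by simp [Matrix.mulVecLin_apply]⟩
    have hAb : A.mulVec (A⁻¹.mulVec b) = b := by
      rw [Matrix.mulVec_mulVec, Matrix.mul_nonsing_inv A hA, Matrix.one_mulVec]
    have he : (P⁻¹ * A).mulVec (A⁻¹.mulVec b - u k)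
        = r₀ - (P⁻¹ * A).mulVec (u k - x₀) := by
      have h1 : A.mulVec (A⁻¹.mulVec b - u k)
          = (b - A.mulVec x₀) - A.mulVec (u k - x₀) := by
        rw [Matrix.mulVec_sub, Matrix.mulVec_sub, hAb]; abel
      rw [hr₀, ← Matrix.mulVec_mulVec, h1, ← Matrix.mulVec_mulVec,
        ← Matrix.mulVec_sub]
    have key : u (k + 1) - x₀ = (u k - x₀) + (Q k).mulVec (A⁻¹.mulVec b - u k)
        + (r₀ - (P⁻¹ * A).mulVec (u k - x₀)
          - (P⁻¹ * A).mulVec ((Q k).mulVec (A⁻¹.mulVec b - u k))) := by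
      rw [hu k, mul_sub, mul_one, Matrix.sub_mulVec, Matrix.mulVec_mulVec, he]
      abel
    rw [key]
    refine add_mem (add_mem (hmono k ih) (hmono k hQmem))
      (sub_mem (sub_mem (hr k) (hmap k _ ih)) (hmap k _ hQmem))
end

section
/- Let A, P be invertible N×N real matrices, b ∈ ℝᴺ, x₀ ∈ ℝᴺ, x^∞ := A⁻¹·b, M := P⁻¹·A, r̃₀ := P⁻¹·(b − A·x₀), and Kⁿ := span{Mᵏ·r̃₀ : 0 ≤ k ≤ n−1} (K⁰ := {0}). Suppose the family (Q_k) of N×N real matrices satisfies for each k: range(Q_k) ⊆ Kᵏ, Q_k·z = z for every z ∈ Kᵏ, and the least-squares property: for all w ∈ ℝᴺ and z ∈ Kᵏ, ‖M·(w − Q_k·w)‖₂ ≤ ‖M·(w − z)‖₂. Define u(0) := x₀ and u(k+1) := u(k) + Q_k·(x^∞ − u(k)) + M·(I − Q_k)·(x^∞ − u(k)). Then for every n, the fractional iterate y := u(n) + Q_n·(x^∞ − u(n)) satisfies y − x₀ ∈ Kⁿ and, for all z ∈ Kⁿ, ‖P⁻¹·(b − A·y)‖₂ ≤ ‖P⁻¹·(b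 − A·(x₀ + z))‖₂. That is, the DFPI fractional iterate is exactly the n-th iterate of left-preconditioned GMRES started from x₀. -/
open Matrix

/-- The Euclidean (ℓ²) norm of a vector of `ℝᴺ`. -/
noncomputable def euclNorm {n : ℕ} (v : Fin n → ℝ) : ℝ :=
  ‖(WithLp.equiv 2 (Fin n → ℝ)).symm v‖

theorem stmt16 {N : ℕ} (A P : Matrix (Fin N) (Fin N) ℝ)
    (hA : IsUnit A.det) (hP : IsUnit P.det)
    (b x₀ : Fin N → ℝ)
    (M : Matrix (Fin N) (Fin N) ℝ) (hM : M = P⁻¹ * A)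
    (r₀ : Fin N → ℝ) (hr₀ : r₀ = P⁻¹.mulVec (b - A.mulVec x₀))
    (K : ℕ → Submodule ℝ (Fin N → ℝ))
    (hK : ∀ n, K n = Submodule.span ℝ
        (Set.range fun k : Fin n => (M ^ (k : ℕ)).mulVec r₀))
    (Q : ℕ → Matrix (Fin N) (Fin N) ℝ)
    (hQrange : ∀ k, LinearMap.range (Q k).mulVecLin ≤ K k)
    (hQfix : ∀ k, ∀ z ∈ K k, (Q k).mulVec z = z)
    (hQls : ∀ k, ∀ w : Fin N → ℝ, ∀ z ∈ K k,
      euclNorm (M.mulVec (w - (Q k).mulVec w)) ≤ euclNorm (M.mulVec (w - z)))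
    (u : ℕ → (Fin N → ℝ)) (hu0 : u 0 = x₀)
    (hu : ∀ k, u (k + 1) = u k + (Q k).mulVec (A⁻¹.mulVec b - u k)
      + (M * (1 - Q k)).mulVec (A⁻¹.mulVec b - u k)) :
    ∀ n, ∀ y : Fin N → ℝ, y = u n + (Q n).mulVec (A⁻¹.mulVec b - u n) →
      y - x₀ ∈ K n ∧
      ∀ z ∈ K n,
        euclNorm (P⁻¹.mulVec (b - A.mulVec y))
          ≤ euclNorm (P⁻¹.mulVec (b - A.mulVec (x₀ + z))) := by
  have hAinv : A * A⁻¹ = 1 := Matrix.mul_nonsing_inv A hA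
  have hAb : A.mulVec (A⁻¹.mulVec b) = b := by
    rw [Matrix.mulVec_mulVec, hAinv, Matrix.one_mulVec]
  -- K is monotone
  have hKmono : ∀ k, K k ≤ K (k + 1) := by
    intro k
    rw [hK k, hK (k + 1)]
    apply Submodule.span_mono
    rintro _ ⟨i, rfl⟩
    exact ⟨⟨i, Nat.lt_succ_of_lt i.isLt⟩, rfl⟩
  -- M maps K k into K (k+1)
  have hMmap : ∀ k, ∀ v ∈ K k, M.mulVec v ∈ K (k + 1) := by
    intro k v hv
    rw [hK k] at hv
    rw [hK (k + 1)]
    induction hv using Submodule.span_induction with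
    | mem x hx =>
      obtain ⟨i, rfl⟩ := hx
      apply Submodule.subset_span
      refine ⟨⟨i + 1, Nat.succ_lt_succ i.isLt⟩, ?_⟩
      simp [Matrix.mulVec_mulVec, pow_succ']
    | zero => simp [Matrix.mulVec_zero]
    | add x y _ _ hx hy => rw [Matrix.mulVec_add]; exact Submodule.add_mem _ hx hy
    | smul c x _ hx =>
      rw [Matrix.mulVec_smul]; exact Submodule.smul_mem _ c hx
  have hr0mem : ∀ k, r₀ ∈ K (k + 1) := by
    intro k
    rw [hK (k + 1)]
    apply Submodule.subset_span
    exact ⟨⟨0, Nat.succ_pos k⟩, by simp⟩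
  -- u n - x₀ ∈ K n
  have hukey : ∀ n, u n - x₀ ∈ K n := by
    intro n
    induction n with
    | zero => simp [hu0]
    | succ k ih =>
      have hQe : (Q k).mulVec (A⁻¹.mulVec b - u k) ∈ K k :=
        hQrange k ⟨_, rfl⟩
      have hMe0 : M.mulVec (A⁻¹.mulVec b - x₀) = r₀ := by
        rw [hM, hr₀, ← Matrix.mulVec_mulVec, Matrix.mulVec_sub, hAb,
          Matrix.mulVec_sub]
      have hMuk : M.mulVec (A⁻¹.mulVec b - u k)
          = r₀ - M.mulVec (u k - x₀) := by
        rw [← hMe0, ← Matrix.mulVec_sub]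
        congr 1
        abel
      have hM1Q : (M * (1 - Q k)).mulVec (A⁻¹.mulVec b - u k)
          = M.mulVec (A⁻¹.mulVec b - u k)
            - M.mulVec ((Q k).mulVec (A⁻¹.mulVec b - u k)) := by
        rw [← Matrix.mulVec_mulVec, Matrix.sub_mulVec, Matrix.one_mulVec,
          Matrix.mulVec_sub]
      have step : u (k + 1) - x₀ = (u k - x₀) + (Q k).mulVec (A⁻¹.mulVec b - u k)
          + (r₀ - M.mulVec (u k - x₀) - M.mulVec ((Q k).mulVec (A⁻¹.mulVec b - u k))) := by
        rw [hu k, hM1Q, hMuk]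
        abel
      rw [step]
      refine Submodule.add_mem _ (Submodule.add_mem _ (hKmono k ih) (hKmono k hQe))
        (Submodule.sub_mem _ (Submodule.sub_mem _ (hr0mem k) (hMmap k _ ih))
          (hMmap k _ hQe))
  intro n y hy
  have hQe : (Q n).mulVec (A⁻¹.mulVec b - u n) ∈ K n := hQrange n ⟨_, rfl⟩
  constructor
  · have : y - x₀ = (u n - x₀) + (Q n).mulVec (A⁻¹.mulVec b - u n) := by
      rw [hy]; abel
    rw [this]
    exact Submodule.add_mem _ (hukey n) hQe
  · intro z hz
    -- rewrite residuals through M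
    have hres : ∀ w : Fin N → ℝ,
        P⁻¹.mulVec (b - A.mulVec w) = M.mulVec (A⁻¹.mulVec b - w) := by
      intro w
      conv_rhs => rw [hM, ← Matrix.mulVec_mulVec, Matrix.mulVec_sub, hAb]
    have hy' : A⁻¹.mulVec b - y
        = (A⁻¹.mulVec b - u n) - (Q n).mulVec (A⁻¹.mulVec b - u n) := by
      rw [hy]; abel
    have hz' : z - (u n - x₀) ∈ K n :=
      Submodule.sub_mem _ hz (hukey n)
    have := hQls n (A⁻¹.mulVec b - u n) _ hz'
    have heq : (A⁻¹.mulVec b - u n) - (z - (u n - x₀))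
        = A⁻¹.mulVec b - (x₀ + z) := by abel
    rw [heq] at this
    rw [hres y, hres (x₀ + z), hy']
    exact this
end

section
/- Let A, P be invertible N×N real matrices, M := P⁻¹·A, b ∈ ℝᴺ, x^∞ := A⁻¹·b. Let Z be an N×m real matrix such that Zᵀ·Z and Zᵀ·M·Z are invertible. Define the orthogonal projector O := Z·(Zᵀ·Z)⁻¹·Zᵀ and the Galerkin projector Q := Z·(Zᵀ·M·Z)⁻¹·Zᵀ·M. Let x̂, x̃ ∈ ℝᴺ satisfy O·x̂ = x̂ and O·x̃ = 0, and set x := x̂ + x̃. Define the multiplicative RPM step: x̂′ := x̂ + Q·(x^∞ − x) and x̃′ := (I − O)·F(x̂′ + x̃), where F(y) := y + P⁻¹·(b − A·y). Then x̂′ + x̃′ = x + Q·(x^∞ − x) + M·(I − Q)·(x^∞ − x); i.e., the multiplicative Recursive Projection Method step coincides with the DFPI step with the Galerkin projection Q. -/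
open Matrix

theorem stmt17 {N m : ℕ} (A P : Matrix (Fin N) (Fin N) ℝ)
    (hA : IsUnit A.det) (hP : IsUnit P.det)
    (M : Matrix (Fin N) (Fin N) ℝ) (hM : M = P⁻¹ * A)
    (b : Fin N → ℝ)
    (Z : Matrix (Fin N) (Fin m) ℝ)
    (hZZ : IsUnit (Zᵀ * Z).det) (hZMZ : IsUnit (Zᵀ * M * Z).det)
    (O Q : Matrix (Fin N) (Fin N) ℝ)
    (hO : O = Z * (Zᵀ * Z)⁻¹ * Zᵀ)
    (hQ : Q = Z * (Zᵀ * M * Z)⁻¹ * Zᵀ * M)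
    (xhat xtil : Fin N → ℝ)
    (hxhat : O.mulVec xhat = xhat) (hxtil : O.mulVec xtil = 0)
    (x : Fin N → ℝ) (hx : x = xhat + xtil)
    (F : (Fin N → ℝ) → (Fin N → ℝ))
    (hF : ∀ y, F y = y + P⁻¹.mulVec (b - A.mulVec y))
    (xhat' xtil' : Fin N → ℝ)
    (hxhat' : xhat' = xhat + Q.mulVec (A⁻¹.mulVec b - x))
    (hxtil' : xtil' = (1 - O).mulVec (F (xhat' + xtil))) :
    xhat' + xtil'
      = x + Q.mulVec (A⁻¹.mulVec b - x)
        + (M * (1 - Q)).mulVec (A⁻¹.mulVec b - x) := by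
  have hZZ1 : (Zᵀ * Z)⁻¹ * (Zᵀ * Z) = 1 := Matrix.nonsing_inv_mul _ hZZ
  have hZMZ1 : (Zᵀ * M * Z) * (Zᵀ * M * Z)⁻¹ = 1 := Matrix.mul_nonsing_inv _ hZMZ
  have hOZ : O * Z = Z := by
    rw [hO, Matrix.mul_assoc, Matrix.mul_assoc, hZZ1, Matrix.mul_one]
  have hOQ : O * Q = Q := by
    rw [hQ, ← Matrix.mul_assoc, ← Matrix.mul_assoc, ← Matrix.mul_assoc, hOZ]
  have hZMQ : Zᵀ * M * Q = Zᵀ * M := by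
    rw [hQ, ← Matrix.mul_assoc, ← Matrix.mul_assoc, ← Matrix.mul_assoc, hZMZ1,
      Matrix.one_mul]
  have hOM0 : O * (M * (1 - Q)) = 0 := by
    have h1 : Zᵀ * (M * (1 - Q)) = 0 := by
      rw [← Matrix.mul_assoc, Matrix.mul_sub, Matrix.mul_one, hZMQ, sub_self]
    rw [hO, Matrix.mul_assoc, h1, Matrix.mul_zero]
  have hAinf : A.mulVec (A⁻¹.mulVec b) = b := by
    rw [Matrix.mulVec_mulVec, Matrix.mul_nonsing_inv _ hA, Matrix.one_mulVec]
  have hFy : ∀ y, F y = y + M.mulVec (A⁻¹.mulVec b - y) := by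
    intro y
    have h2 : A.mulVec (A⁻¹.mulVec b - y) = b - A.mulVec y := by
      rw [Matrix.mulVec_sub, hAinf]
    rw [hF, hM, ← h2, ← Matrix.mulVec_mulVec]
  have hOxh' : O.mulVec xhat' = xhat' := by
    rw [hxhat', Matrix.mulVec_add, hxhat, Matrix.mulVec_mulVec, hOQ]
  have hinner : A⁻¹.mulVec b - (xhat' + xtil)
      = (1 - Q).mulVec (A⁻¹.mulVec b - x) := by
    rw [hxhat', hx, Matrix.sub_mulVec, Matrix.one_mulVec]
    abel
  rw [hxtil', hFy, hinner, Matrix.sub_mulVec, Matrix.one_mulVec,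
    Matrix.mulVec_add, Matrix.mulVec_add, hOxh', hxtil,
    Matrix.mulVec_mulVec, Matrix.mulVec_mulVec, hOM0,
    Matrix.zero_mulVec, hxhat', hx]
  abel
end

section
/- Let A, P be invertible N×N real matrices, b ∈ ℝᴺ, x^∞ := A⁻¹·b, and let Q be an N×N real matrix with Q·Q = Q. Consider the pre-projection DFPI sequence x(0) := x₀, x(n+1) := x(n) + Q·(x^∞ − x(n)) + P⁻¹·A·(I − Q)·(x^∞ − x(n)), and the post-projection sequence y(0) := x₀ + Q·(x^∞ − x₀), y(n+1) := w(n) + Q·(x^∞ − w(n)) where w(n) := y(n) + P⁻¹·A·(x^∞ − y(n)). Then for every n, y(n) equals the pre-projection fractional iterate: y(n) = x(n) + Q·(x^∞ − x(n)); i.e., permuting the fractional (projection) and full (Richardson) steps yields equivalent iterations. -/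
open Matrix

theorem stmt19 {N : ℕ} (A P Q : Matrix (Fin N) (Fin N) ℝ)
    (hA : IsUnit A.det) (hP : IsUnit P.det)
    (hQ : Q * Q = Q)
    (b x₀ : Fin N → ℝ)
    (x : ℕ → (Fin N → ℝ)) (hx0 : x 0 = x₀)
    (hx : ∀ n, x (n + 1) = x n + Q.mulVec (A⁻¹.mulVec b - x n)
      + (P⁻¹ * A * (1 - Q)).mulVec (A⁻¹.mulVec b - x n))
    (y : ℕ → (Fin N → ℝ)) (hy0 : y 0 = x₀ + Q.mulVec (A⁻¹.mulVec b - x₀))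
    (w : ℕ → (Fin N → ℝ))
    (hw : ∀ n, w n = y n + (P⁻¹ * A).mulVec (A⁻¹.mulVec b - y n))
    (hy : ∀ n, y (n + 1) = w n + Q.mulVec (A⁻¹.mulVec b - w n)) :
    ∀ n, y n = x n + Q.mulVec (A⁻¹.mulVec b - x n) := by
  intro n
  induction n with
  | zero => rw [hy0, hx0]
  | succ n ih =>
    rw [hy, hw, ih, hx]
    simp only [mul_sub, mul_one, sub_mul, Matrix.mulVec_sub, Matrix.mulVec_add,
      Matrix.sub_mulVec, Matrix.add_mulVec, Matrix.mulVec_mulVec, Matrix.one_mulVec,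
      mul_assoc]
    abel
end
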